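/- In the partic algebra, the products a_{i+1} a_i and a_i a_{i-1} commute for all 2 ≤ i ≤ N-2, i.e. (a_{i+1} a_i)(a_i a_{i-1}) = (a_i a_{i-1})(a_{i+1} a_i). -/
import Mathlib


inductive ParticRel (K : Type*) [CommRing K] (N : ℕ) :
    FreeAlgebra K (Fin (N - 1)) → FreeAlgebra K (Fin (N - 1)) → Prop
  | plac1 : ∀ i j : Fin (N - 1), (i : ℕ) = (j : ℕ) + 1 →
      ParticRel K N (FreeAlgebra.ι K i * FreeAlgebra.ι K j * FreeAlgebra.ι K i)
        (FreeAlgebra.ι K i * FreeAlgebra.ι K i * FreeAlgebra.ι K j)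
  | plac2 : ∀ i j : Fin (N - 1), (j : ℕ) = (i : ℕ) + 1 →
      ParticRel K N (FreeAlgebra.ι K i * FreeAlgebra.ι K j * FreeAlgebra.ι K i)
        (FreeAlgebra.ι K j * FreeAlgebra.ι K i * FreeAlgebra.ι K i)
  | comm : ∀ i j : Fin (N - 1), (i : ℕ) + 1 < (j : ℕ) →
      ParticRel K N (FreeAlgebra.ι K i * FreeAlgebra.ι K j)
        (FreeAlgebra.ι K j * FreeAlgebra.ι K i)
  | partic : ∀ lo mid hi : Fin (N - 1), (mid : ℕ) = (lo : ℕ) + 1 → (hi : ℕ) = (mid : ℕ) + 1 →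
      ParticRel K N
        (FreeAlgebra.ι K mid * FreeAlgebra.ι K lo * FreeAlgebra.ι K hi * FreeAlgebra.ι K mid)
        (FreeAlgebra.ι K hi * FreeAlgebra.ι K mid * FreeAlgebra.ι K lo * FreeAlgebra.ι K mid)

/-- The partic algebra `PP_N`, with generators `a_1, …, a_{N-1}`. -/
abbrev ParticAlgebra (K : Type*) [CommRing K] (N : ℕ) := RingQuot (ParticRel K N)

/-- The generator `a_i` of the partic algebra, for `1 ≤ i ≤ N-1` (junk value `0`
outside that range). -/
noncomputable def ppa (K : Type*) [CommRing K] (N : ℕ) (i : ℕ) : ParticAlgebra K N :=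
  if h : 1 ≤ i ∧ i ≤ N - 1 then
    RingQuot.mkAlgHom K (ParticRel K N) (FreeAlgebra.ι K ⟨i - 1, by omega⟩) else 0

/-- In the partic algebra, `(a_{i+1} a_i)(a_i a_{i-1}) = (a_i a_{i-1})(a_{i+1} a_i)`
for `2 ≤ i ≤ N-2`. -/
theorem stmt3 (K : Type*) [Field K] (N : ℕ) (hN : 4 ≤ N) (i : ℕ)
    (h1 : 2 ≤ i) (h2 : i ≤ N - 2) :
    (ppa K N (i + 1) * ppa K N i) * (ppa K N i * ppa K N (i - 1)) =
      (ppa K N i * ppa K N (i - 1)) * (ppa K N (i + 1) * ppa K N i) := by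
  have hlo : 1 ≤ i - 1 ∧ i - 1 ≤ N - 1 := by omega
  have hmid : 1 ≤ i ∧ i ≤ N - 1 := by omega
  have hhi : 1 ≤ i + 1 ∧ i + 1 ≤ N - 1 := by omega
  let lo : Fin (N - 1) := ⟨i - 1 - 1, by omega⟩
  let mid : Fin (N - 1) := ⟨i - 1, by omega⟩
  let hi : Fin (N - 1) := ⟨i + 1 - 1, by omega⟩
  have ea : ppa K N (i - 1) = RingQuot.mkAlgHom K (ParticRel K N) (FreeAlgebra.ι K lo) :=
    dif_pos hlo
  have eb : ppa K N i = RingQuot.mkAlgHom K (ParticRel K N) (FreeAlgebra.ι K mid) :=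
    dif_pos hmid
  have ec : ppa K N (i + 1) = RingQuot.mkAlgHom K (ParticRel K N) (FreeAlgebra.ι K hi) :=
    dif_pos hhi
  rw [ea, eb, ec]
  generalize hA : RingQuot.mkAlgHom K (ParticRel K N) (FreeAlgebra.ι K lo) = a at *
  generalize hB : RingQuot.mkAlgHom K (ParticRel K N) (FreeAlgebra.ι K mid) = b at *
  generalize hC : RingQuot.mkAlgHom K (ParticRel K N) (FreeAlgebra.ι K hi) = c at *
  have e1 : b * a * b = b * b * a := by
    rw [← hA, ← hB, ← map_mul, ← map_mul, ← map_mul, ← map_mul]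
    exact RingQuot.mkAlgHom_rel K (ParticRel.plac1 mid lo (by simp [lo, mid]; omega))
  have e2 : b * a * c * b = c * b * a * b := by
    rw [← hA, ← hB, ← hC, ← map_mul, ← map_mul, ← map_mul, ← map_mul, ← map_mul, ← map_mul]
    exact RingQuot.mkAlgHom_rel K
      (ParticRel.partic lo mid hi (by simp [lo, mid]; omega) (by simp [mid, hi]; omega))
  calc c * b * (b * a) = c * (b * b * a) := by rw [mul_assoc, mul_assoc, ← mul_assoc b b a]
    _ = c * (b * a * b) := by rw [e1]
    _ = c * b * a * b := by rw [mul_assoc c b a, ← mul_assoc, ← mul_assoc]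
    _ = b * a * c * b := e2.symm
    _ = b * a * (c * b) := by rw [mul_assoc]
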